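/- Let $\{\xi(z):z\in\mathbb{Z}^d\}$ be i.i.d. with $P(\xi(0)>x)=e^{-x^\gamma}$, $x\ge0$, $0<\gamma\le1$, and let $M_n^{(k)}$ be the $(k+1)$st largest value of $\xi$ over the $\ell^1$-ball of radius $n$. Fix $0<\rho_1<\rho_2<1$ and set $k_n=\lfloor n^{\rho_1}\rfloor$, $m_n=\lfloor n^{\rho_2}\rfloor$. Then there is a constant $c>0$ such that almost surely, eventually for all $n$: (i) $M_n^{(0)}-M_n^{(k_n)}\ge c(\log n)^{1/\gamma}$ and (ii) $M_n^{(k_n)}-M_n^{(m_n)}\ge c(\log n)^{1/\gamma}$. -/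

import Mathlib

/-!
The level `(a log n)^(1/γ)` is exceeded at a given site with probability exactly `n^(-a)`, while the
ball of radius `n` has of order `n^d` sites. A union bound over the `κ`-element subsets of the ball
shows that, with probability `1 - O(n^(-2))`, more than `n^σ` sites exceed `(a log n)^(1/γ)` when
`a + σ < d`, and at most `n^ρ` sites exceed `(b log n)^(1/γ)` when `b + ρ > d`; by Borel–Cantelli
both hold almost surely for all large `n`. Hence the order statistic of rank `n^ρ` lies eventually
between `((d - ρ - δ) log n)^(1/γ)` and `((d - ρ + δ) log n)^(1/γ)`, and for small `δ` the upper
bounds at ranks `n^ρ₁`, `n^ρ₂` stay a multiple of `(log n)^(1/γ)` below the lower bounds at ranks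
`0`, `n^ρ₁`.
-/

open MeasureTheory ProbabilityTheory Filter
open scoped Classical

/-- The ℓ¹-ball of radius `n` in `ℤᵈ`, as a finite set. -/
noncomputable def latticeBall (d n : ℕ) : Finset (Fin d → ℤ) :=
  (Finset.Icc (fun _ => -(n : ℤ)) (fun _ => (n : ℤ))).filter
    (fun z => ∑ j, (z j).natAbs ≤ n)

open Finset Real
open scoped ENNReal

lemma card_latticeBall_le (d n : ℕ) : #(latticeBall d n) ≤ (2 * n + 1) ^ d :=
  calc #(latticeBall d n) ≤ #(Icc (fun _ : Fin d => -(n : ℤ)) fun _ => (n : ℤ)) :=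
        card_filter_le _ _
    _ = (2 * n + 1) ^ d := by simp [Pi.card_Icc]; congr 1; omega

lemma pow_le_card_latticeBall (d n : ℕ) : (n / d + 1) ^ d ≤ #(latticeBall d n) := by
  have hsub : Icc (0 : Fin d → ℤ) (fun _ => ((n / d : ℕ) : ℤ)) ⊆ latticeBall d n := by
    intro z hz
    simp only [mem_Icc, Pi.le_def, Pi.zero_apply] at hz
    have hnd : ((n / d : ℕ) : ℤ) ≤ n := by exact_mod_cast Nat.div_le_self n d
    have hz' : ∀ j, (z j).natAbs ≤ n / d := fun j => by have := hz.1 j; have := hz.2 j; omega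
    refine mem_filter.2 ⟨mem_Icc.2 ⟨fun j => ?_, fun j => ?_⟩, ?_⟩
    · have := hz.1 j; simp only; omega
    · have := hz.2 j; simp only; omega
    · calc ∑ j, (z j).natAbs ≤ ∑ _j : Fin d, n / d := sum_le_sum fun j _ => hz' j
        _ = d * (n / d) := by simp
        _ ≤ n := Nat.mul_div_le n d
  calc (n / d + 1) ^ d = #(Icc (0 : Fin d → ℤ) (fun _ => ((n / d : ℕ) : ℤ))) := by
        simp only [Pi.card_Icc, Pi.zero_apply, Int.card_Icc, sub_zero, prod_const, card_univ,
          Fintype.card_fin]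
        norm_cast
    _ ≤ #(latticeBall d n) := card_le_card hsub

lemma div_pow_le_card_latticeBall (d n : ℕ) : ((n : ℝ) / d) ^ d ≤ #(latticeBall d n) := by
  have h : (n : ℝ) / d ≤ (n / d : ℕ) + 1 := by
    rw [← Nat.floor_div_eq_div (K := ℝ)]; exact (Nat.lt_floor_add_one _).le
  calc ((n : ℝ) / d) ^ d ≤ ((n / d : ℕ) + 1 : ℝ) ^ d := by gcongr
    _ ≤ #(latticeBall d n) := by exact_mod_cast pow_le_card_latticeBall d n

lemma Nat.choose_mul_pow_le_pow (N j : ℕ) {p : ℝ} (hp : 0 ≤ p) :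
    (N.choose j : ℝ) * p ^ j ≤ (exp 1 * N * p / j) ^ j := by
  rcases j.eq_zero_or_pos with rfl | hj
  · simp
  have hfact : (j : ℝ) ^ j / j.factorial ≤ exp 1 ^ j := by
    rw [← Real.exp_nat_mul, mul_one]; exact Real.pow_div_factorial_le_exp _ (Nat.cast_nonneg j) j
  calc (N.choose j : ℝ) * p ^ j ≤ N ^ j / j.factorial * p ^ j := by
        gcongr; exact Nat.choose_le_pow_div j N
    _ = (N * p / j) ^ j * ((j : ℝ) ^ j / j.factorial) := by
        have : (j : ℝ) ≠ 0 := by positivity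
        rw [div_pow, mul_pow]; field_simp
    _ ≤ (N * p / j) ^ j * exp 1 ^ j := by gcongr
    _ = (exp 1 * N * p / j) ^ j := by rw [← mul_pow]; ring

lemma Nat.choose_sub_mul_one_sub_pow_le {N k : ℕ} (hk : k ≤ N) {p : ℝ} (hp : p ≤ 1) :
    (N.choose (N - k) : ℝ) * (1 - p) ^ (N - k) ≤ N ^ k * exp (k - p * N) := by
  have hchoose : (N.choose (N - k) : ℝ) ≤ N ^ k := by
    rw [Nat.choose_symm hk]; exact_mod_cast Nat.choose_le_pow N k
  have hpow : (1 - p) ^ (N - k) ≤ exp (k - p * N) :=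
    calc (1 - p) ^ (N - k) ≤ exp (-p) ^ (N - k) :=
          pow_le_pow_left₀ (by linarith) (one_sub_le_exp_neg p) _
      _ = exp (-(p * (N - k : ℕ))) := by rw [← Real.exp_nat_mul]; ring_nf
      _ ≤ exp (k - p * N) := by
          gcongr; push_cast [hk]; nlinarith [(Nat.cast_nonneg k : (0 : ℝ) ≤ k)]
  exact mul_le_mul hchoose hpow (by positivity) (by positivity)

section Independence

variable {Ω ι : Type*} [MeasurableSpace Ω] {μ : Measure Ω} {ξ : ι → Ω → ℝ}

theorem ProbabilityTheory.iIndepFun.measure_le_card_filter_le (hξ : iIndepFun ξ μ)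
    {B : Set ℝ} (hB : MeasurableSet B) {q : ℝ≥0∞} (hq : ∀ i, μ (ξ i ⁻¹' B) = q)
    (S : Finset ι) (j : ℕ) :
    μ {ω | j ≤ #{i ∈ S | ξ i ω ∈ B}} ≤ (#S).choose j * q ^ j :=
  calc μ {ω | j ≤ #{i ∈ S | ξ i ω ∈ B}}
      ≤ μ (⋃ T ∈ S.powersetCard j, ⋂ i ∈ T, ξ i ⁻¹' B) := measure_mono fun ω hω => by
        obtain ⟨T, hTS, hT⟩ := exists_subset_card_eq hω
        exact Set.mem_biUnion (mem_powersetCard.2 ⟨hTS.trans (filter_subset _ _), hT⟩)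
          (Set.mem_iInter₂.2 fun i hi => (mem_filter.1 (hTS hi)).2)
    _ ≤ ∑ T ∈ S.powersetCard j, μ (⋂ i ∈ T, ξ i ⁻¹' B) := measure_biUnion_finset_le _ _
    _ = ∑ _T ∈ S.powersetCard j, q ^ j := sum_congr rfl fun T hT => by
        rw [hξ.meas_biInter fun i _ => ⟨B, hB, rfl⟩, prod_congr rfl fun i _ => hq i,
          prod_const, (mem_powersetCard.1 hT).2]
    _ = (#S).choose j * q ^ j := by rw [sum_const, card_powersetCard, nsmul_eq_mul]

theorem ProbabilityTheory.iIndepFun.measure_card_filter_lt_le [IsProbabilityMeasure μ]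
    (hξ : iIndepFun ξ μ) (hmeas : ∀ i, Measurable (ξ i)) {x : ℝ} {q : ℝ≥0∞}
    (hq : ∀ i, μ {ω | x < ξ i ω} = q) (S : Finset ι) (k : ℕ) :
    μ {ω | #{i ∈ S | x < ξ i ω} ≤ k} ≤ (#S).choose (#S - k) * (1 - q) ^ (#S - k) := by
  have hq' : ∀ i, μ (ξ i ⁻¹' Set.Iic x) = 1 - q := fun i => by
    rw [← hq i, ← prob_compl_eq_one_sub (s := {ω | x < ξ i ω}) (hmeas i measurableSet_Ioi)]
    congr 1; ext ω; simp
  refine (measure_mono fun ω hω => ?_).trans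
    (hξ.measure_le_card_filter_le measurableSet_Iic hq' S _)
  have := card_filter_add_card_filter_not (s := S) (p := fun i => x < ξ i ω)
  simp only [Set.mem_ofPred_eq, Set.mem_Iic, not_lt] at hω this ⊢
  omega

theorem ae_eventually_notMem_of_le_ofReal [IsFiniteMeasure μ] {A : ℕ → Set Ω} {g : ℕ → ℝ}
    (hg : Summable g) (h : ∀ᶠ n in atTop, μ (A n) ≤ ENNReal.ofReal (g n)) :
    ∀ᵐ ω ∂μ, ∀ᶠ n in atTop, ω ∉ A n := by
  refine ae_eventually_notMem ?_
  have hsum : Summable fun n => (μ (A n)).toReal := hg.abs.of_norm_bounded_eventually_nat <| by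
    filter_upwards [h] with n hn
    rw [Real.norm_eq_abs, abs_of_nonneg ENNReal.toReal_nonneg]
    exact ENNReal.toReal_le_of_le_ofReal (abs_nonneg _)
      (hn.trans (ENNReal.ofReal_le_ofReal (le_abs_self _)))
  have htsum : ∑' n, μ (A n) = ENNReal.ofReal (∑' n, (μ (A n)).toReal) := by
    rw [ENNReal.ofReal_tsum_of_nonneg (fun _ => ENNReal.toReal_nonneg) hsum]
    simp only [ENNReal.ofReal_toReal (measure_ne_top μ _)]
  exact htsum ▸ ENNReal.ofReal_ne_top

end Independence

lemma eventually_one_le_log : ∀ᶠ n : ℕ in atTop, 1 ≤ log n :=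
  (tendsto_log_atTop.comp tendsto_natCast_atTop_atTop).eventually_ge_atTop 1

lemma eventually_mul_log_mul_rpow_le_rpow (C : ℝ) {α β : ℝ} (hαβ : α < β) :
    ∀ᶠ n : ℕ in atTop, C * log n * (n : ℝ) ^ α ≤ (n : ℝ) ^ β := by
  have h := ((isLittleO_log_rpow_atTop (sub_pos.2 hαβ)).const_mul_left C).bound one_pos
  filter_upwards [tendsto_natCast_atTop_atTop.eventually h, eventually_gt_atTop 0] with n hn hn₀
  have hn' : (0 : ℝ) < n := by exact_mod_cast hn₀
  rw [one_mul, Real.norm_eq_abs, Real.norm_eq_abs,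
    abs_of_nonneg (rpow_nonneg (Nat.cast_nonneg n) _)] at hn
  calc C * log n * (n : ℝ) ^ α ≤ (n : ℝ) ^ (β - α) * (n : ℝ) ^ α := by
        gcongr; exact (le_abs_self _).trans hn
    _ = (n : ℝ) ^ β := by rw [← rpow_add hn', sub_add_cancel]

lemma eventually_choose_mul_rpow_neg_pow_le_inv_sq {d : ℕ} {b ρ : ℝ} (hρ : 0 < ρ)
    (hbρ : d < b + ρ) :
    ∀ᶠ n : ℕ in atTop, ∀ N j : ℕ, N ≤ (2 * n + 1) ^ d → (n : ℝ) ^ ρ ≤ j →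
      (N.choose j : ℝ) * ((n : ℝ) ^ (-b)) ^ j ≤ ((n : ℝ) ^ 2)⁻¹ := by
  filter_upwards [eventually_mul_log_mul_rpow_le_rpow (2 * exp 1 * 3 ^ d)
      (show d - b < ρ by linarith), eventually_mul_log_mul_rpow_le_rpow (2 / log 2) hρ,
    eventually_one_le_log, eventually_gt_atTop 0] with n hmass hlog hlog₁ hn₀ N j hN hj
  have hn : (0 : ℝ) < n := by exact_mod_cast hn₀
  have hj₀ : (0 : ℝ) < j := (rpow_pos_of_pos hn ρ).trans_le hj
  set p := (n : ℝ) ^ (-b)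
  have hN' : (N : ℝ) ≤ 3 ^ d * (n : ℝ) ^ d := by
    rw [← mul_pow]; exact_mod_cast hN.trans (Nat.pow_le_pow_left (by omega) d)
  have hNp : 2 * exp 1 * N * p ≤ j :=
    calc 2 * exp 1 * N * p ≤ 2 * exp 1 * (3 ^ d * (n : ℝ) ^ d) * p := by gcongr
      _ = 2 * exp 1 * 3 ^ d * 1 * (n : ℝ) ^ ((d : ℝ) - b) := by
          rw [sub_eq_add_neg, rpow_add hn, rpow_natCast]; ring
      _ ≤ 2 * exp 1 * 3 ^ d * log n * (n : ℝ) ^ ((d : ℝ) - b) := by gcongr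
      _ ≤ j := hmass.trans hj
  have hpow : (n : ℝ) ^ 2 ≤ 2 ^ j := by
    rw [rpow_zero, mul_one, div_mul_eq_mul_div, div_le_iff₀ (log_pos one_lt_two)] at hlog
    rw [← log_le_log_iff (by positivity) (by positivity), log_pow, log_pow]
    push_cast
    nlinarith [log_pos one_lt_two]
  calc (N.choose j : ℝ) * p ^ j ≤ (exp 1 * N * p / j) ^ j :=
        Nat.choose_mul_pow_le_pow N j (by positivity)
    _ ≤ (2⁻¹) ^ j := by
        gcongr
        rw [div_le_iff₀ hj₀]; linarith
    _ = (2 ^ j)⁻¹ := inv_pow _ _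
    _ ≤ ((n : ℝ) ^ 2)⁻¹ := inv_anti₀ (by positivity) hpow

lemma eventually_choose_sub_mul_one_sub_rpow_neg_pow_le_inv_sq {d : ℕ} {a σ : ℝ} (ha : 0 ≤ a)
    (hσ : 0 ≤ σ) (haσ : a + σ < d) :
    ∀ᶠ n : ℕ in atTop, ∀ N k : ℕ, ((n : ℝ) / d) ^ d ≤ N → N ≤ (2 * n + 1) ^ d →
      (k : ℝ) ≤ (n : ℝ) ^ σ →
      k ≤ N ∧ (N.choose (N - k) : ℝ) * (1 - (n : ℝ) ^ (-a)) ^ (N - k) ≤ ((n : ℝ) ^ 2)⁻¹ := by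
  have hd : (0 : ℝ) < d := by linarith
  filter_upwards [eventually_mul_log_mul_rpow_le_rpow ((2 * d + 3) * d ^ d)
      (show σ < d - a by linarith), eventually_one_le_log, eventually_ge_atTop 3]
    with n hmass hlog hn₃ N k hN₁ hN₂ hk
  have hn : (1 : ℝ) ≤ n := by exact_mod_cast (show 1 ≤ n by omega)
  set p := (n : ℝ) ^ (-a)
  set s := (n : ℝ) ^ σ
  have hp₁ : p ≤ 1 := rpow_le_one_of_one_le_of_nonpos hn (by linarith)
  have hs : 1 ≤ s := one_le_rpow hn hσ
  have hpN : (2 * d + 3) * log n * s ≤ p * N :=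
    calc (2 * d + 3) * log n * s ≤ ((d : ℝ) ^ d)⁻¹ * (n : ℝ) ^ ((d : ℝ) - a) := by
          rw [le_inv_mul_iff₀ (by positivity)]; linarith
      _ = p * ((n : ℝ) / d) ^ d := by
          rw [div_pow, sub_eq_add_neg, rpow_add (by positivity), rpow_natCast]; ring
      _ ≤ p * N := by gcongr
  have hN₀ : (0 : ℝ) < N := lt_of_lt_of_le (by positivity) hN₁
  have hkN : k ≤ N := by
    have hs' : s ≤ (2 * d + 3) * log n * s := le_mul_of_one_le_left (by positivity) (by nlinarith)
    have hp' : p * N ≤ N := mul_le_of_le_one_left hN₀.le hp₁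
    exact_mod_cast (show (k : ℝ) ≤ N by linarith)
  have hlogN : log N ≤ 2 * d * log n := by
    have h : N ≤ (n ^ 2) ^ d := hN₂.trans (Nat.pow_le_pow_left (by nlinarith) d)
    calc log N ≤ log (((n : ℝ) ^ 2) ^ d) := log_le_log hN₀ (by exact_mod_cast h)
      _ = 2 * d * log n := by rw [log_pow, log_pow]; push_cast; ring
  refine ⟨hkN, (Nat.choose_sub_mul_one_sub_pow_le hkN hp₁).trans ?_⟩
  have hklog : k * log N ≤ s * (2 * d * log n) :=
    mul_le_mul hk hlogN (log_nonneg (by exact_mod_cast hN₀)) (by positivity)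
  calc (N : ℝ) ^ k * exp (k - p * N) = exp (k * log N + k - p * N) := by
        rw [← exp_log hN₀, ← exp_nat_mul, exp_log hN₀, add_sub_assoc, exp_add]
    _ ≤ exp (-(2 * log n)) := exp_le_exp.2 (by nlinarith)
    _ = ((n : ℝ) ^ 2)⁻¹ := by
        rw [exp_neg, show 2 * log n = log ((n : ℝ) ^ 2) by rw [log_pow]; norm_num,
          exp_log (by positivity)]

section LatticeField

variable {Ω : Type*} [MeasurableSpace Ω] {μ : Measure Ω} {d : ℕ} {ξ : (Fin d → ℤ) → Ω → ℝ}
  {x : ℕ → ℝ} {κ : ℕ → ℕ}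

theorem ae_eventually_card_filter_lt_le [IsFiniteMeasure μ] (hξ : iIndepFun ξ μ) {b ρ : ℝ}
    (hρ : 0 < ρ) (hbρ : d < b + ρ)
    (hx : ∀ᶠ n : ℕ in atTop, ∀ z, μ {ω | x n < ξ z ω} = ENNReal.ofReal ((n : ℝ) ^ (-b)))
    (hκ : ∀ᶠ n : ℕ in atTop, (n : ℝ) ^ ρ ≤ κ n + 1) :
    ∀ᵐ ω ∂μ, ∀ᶠ n in atTop, #{z ∈ latticeBall d n | x n < ξ z ω} ≤ κ n := by
  have hbc := ae_eventually_notMem_of_le_ofReal (μ := μ)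
    (A := fun n => {ω | κ n + 1 ≤ #{z ∈ latticeBall d n | x n < ξ z ω}})
    (Real.summable_nat_pow_inv.2 one_lt_two) ?_
  · filter_upwards [hbc] with ω hω
    filter_upwards [hω] with n hn
    simp only [not_le] at hn
    omega
  filter_upwards [hx, hκ, eventually_choose_mul_rpow_neg_pow_le_inv_sq hρ hbρ]
    with n hxn hκn hbound
  calc μ {ω | κ n + 1 ≤ #{z ∈ latticeBall d n | x n < ξ z ω}}
      ≤ (#(latticeBall d n)).choose (κ n + 1) * ENNReal.ofReal ((n : ℝ) ^ (-b)) ^ (κ n + 1) :=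
        hξ.measure_le_card_filter_le measurableSet_Ioi hxn _ _
    _ = ENNReal.ofReal ((#(latticeBall d n)).choose (κ n + 1) * ((n : ℝ) ^ (-b)) ^ (κ n + 1)) := by
        rw [ENNReal.ofReal_mul (by positivity), ENNReal.ofReal_pow (by positivity),
          ENNReal.ofReal_natCast]
    _ ≤ ENNReal.ofReal ((n : ℝ) ^ 2)⁻¹ :=
        ENNReal.ofReal_le_ofReal (hbound _ _ (card_latticeBall_le d n) (by push_cast; exact hκn))

theorem ae_eventually_lt_card_filter_lt [IsProbabilityMeasure μ] (hξ : iIndepFun ξ μ)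
    (hmeas : ∀ z, Measurable (ξ z)) {a σ : ℝ} (ha : 0 ≤ a) (hσ : 0 ≤ σ) (haσ : a + σ < d)
    (hx : ∀ᶠ n : ℕ in atTop, ∀ z, μ {ω | x n < ξ z ω} = ENNReal.ofReal ((n : ℝ) ^ (-a)))
    (hκ : ∀ᶠ n : ℕ in atTop, (κ n : ℝ) ≤ (n : ℝ) ^ σ) :
    ∀ᵐ ω ∂μ, ∀ᶠ n in atTop, κ n < #{z ∈ latticeBall d n | x n < ξ z ω} := by
  have hbc := ae_eventually_notMem_of_le_ofReal (μ := μ)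
    (A := fun n => {ω | #{z ∈ latticeBall d n | x n < ξ z ω} ≤ κ n})
    (Real.summable_nat_pow_inv.2 one_lt_two) ?_
  · filter_upwards [hbc] with ω hω
    filter_upwards [hω] with n hn
    simpa using hn
  filter_upwards [hx, hκ, eventually_choose_sub_mul_one_sub_rpow_neg_pow_le_inv_sq ha hσ haσ,
    eventually_ge_atTop 1] with n hxn hκn hbound hn
  set N := #(latticeBall d n)
  obtain ⟨-, hbound⟩ := hbound N (κ n) (div_pow_le_card_latticeBall d n)
    (card_latticeBall_le d n) hκn
  calc μ {ω | #{z ∈ latticeBall d n | x n < ξ z ω} ≤ κ n}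
      ≤ N.choose (N - κ n) * (1 - ENNReal.ofReal ((n : ℝ) ^ (-a))) ^ (N - κ n) :=
        hξ.measure_card_filter_lt_le hmeas hxn _ _
    _ = ENNReal.ofReal (N.choose (N - κ n) * (1 - (n : ℝ) ^ (-a)) ^ (N - κ n)) := by
        rw [ENNReal.ofReal_mul (by positivity), ENNReal.ofReal_pow
          (sub_nonneg.2 (rpow_le_one_of_one_le_of_nonpos (by exact_mod_cast hn) (by linarith))),
          ENNReal.ofReal_natCast, ENNReal.ofReal_sub _ (by positivity), ENNReal.ofReal_one]
    _ ≤ ENNReal.ofReal ((n : ℝ) ^ 2)⁻¹ := ENNReal.ofReal_le_ofReal hbound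

end LatticeField

/-- `M` is the paper's `M⁽ᵏ⁾`: the `(k+1)`st largest value of `f` on `S`. -/
def IsUpperOrderStat {ι : Type*} (S : Finset ι) (f : ι → ℝ) (k : ℕ) (M : ℝ) : Prop :=
  (∃ z ∈ S, f z = M) ∧ #{z ∈ S | M ≤ f z} = k + 1

namespace IsUpperOrderStat

variable {ι : Type*} {S : Finset ι} {f : ι → ℝ} {k : ℕ} {M y : ℝ}

lemma le_of_lt_card (h : IsUpperOrderStat S f k M) (hy : k < #{z ∈ S | y < f z}) : y ≤ M := by
  by_contra! hM
  obtain ⟨⟨z, hzS, hz⟩, hcard⟩ := h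
  have hss : {z ∈ S | y < f z} ⊂ {z ∈ S | M ≤ f z} :=
    (ssubset_iff_of_subset fun w hw => by
      simp only [mem_filter] at hw ⊢; exact ⟨hw.1, hM.le.trans hw.2.le⟩).2
      ⟨z, by simp [hzS, hz], by simp [hz, hM.le]⟩
  have := card_lt_card hss
  omega

lemma le_of_card_le (h : IsUpperOrderStat S f k M) (hy : #{z ∈ S | y < f z} ≤ k) : M ≤ y := by
  by_contra! hM
  have := card_le_card (s := {z ∈ S | M ≤ f z}) (t := {z ∈ S | y < f z}) fun w hw => by
    simp only [mem_filter] at hw ⊢; exact ⟨hw.1, hM.trans_le hw.2⟩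
  have := h.2
  omega

end IsUpperOrderStat

lemma exp_neg_rpow_one_div_mul_log {γ a x : ℝ} (hγ : γ ≠ 0) (ha : 0 ≤ a) (hx : 1 ≤ x) :
    exp (-((a * log x) ^ (1 / γ)) ^ γ) = x ^ (-a) := by
  rw [← rpow_mul (mul_nonneg ha (log_nonneg hx)), one_div_mul_cancel hγ, rpow_one,
    rpow_def_of_pos (by linarith)]
  ring_nf

lemma mul_rpow_le_sub {a b c L r X Y : ℝ} (ha : 0 ≤ a) (hb : 0 ≤ b) (hL : 0 ≤ L)
    (hc : c ≤ a ^ r - b ^ r) (hX : (a * L) ^ r ≤ X) (hY : Y ≤ (b * L) ^ r) :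
    c * L ^ r ≤ X - Y := by
  rw [mul_rpow ha hL] at hX
  rw [mul_rpow hb hL] at hY
  nlinarith [rpow_nonneg hL r]

section WeibullField

variable {Ω : Type*} [MeasurableSpace Ω] {μ : Measure Ω} {d : ℕ}
  {γ : ℝ} {ξ : (Fin d → ℤ) → Ω → ℝ} {κ : ℕ → ℕ} {M : ℕ → Ω → ℝ}

lemma eventually_measure_lt_rpow_one_div_mul_log (hγ : 0 < γ)
    (hdist : ∀ z, ∀ x : ℝ, 0 ≤ x → μ {ω | x < ξ z ω} = ENNReal.ofReal (exp (-(x ^ γ))))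
    {a : ℝ} (ha : 0 ≤ a) :
    ∀ᶠ n : ℕ in atTop, ∀ z,
      μ {ω | (a * log n) ^ (1 / γ) < ξ z ω} = ENNReal.ofReal ((n : ℝ) ^ (-a)) := by
  filter_upwards [eventually_ge_atTop 1] with n hn z
  have hn' : (1 : ℝ) ≤ n := by exact_mod_cast hn
  rw [hdist z _ (rpow_nonneg (mul_nonneg ha (log_nonneg hn')) _),
    exp_neg_rpow_one_div_mul_log hγ.ne' ha hn']

theorem ae_eventually_rpow_one_div_mul_log_le [IsProbabilityMeasure μ] (hγ : 0 < γ)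
    (hξ : iIndepFun ξ μ) (hmeas : ∀ z, Measurable (ξ z))
    (hdist : ∀ z, ∀ x : ℝ, 0 ≤ x → μ {ω | x < ξ z ω} = ENNReal.ofReal (exp (-(x ^ γ))))
    {a σ : ℝ} (ha : 0 ≤ a) (hσ : 0 ≤ σ) (haσ : a + σ < d)
    (hκ : ∀ᶠ n : ℕ in atTop, (κ n : ℝ) ≤ (n : ℝ) ^ σ)
    (hM : ∀ᵐ ω ∂μ, ∀ᶠ n in atTop, IsUpperOrderStat (latticeBall d n) (ξ · ω) (κ n) (M n ω)) :
    ∀ᵐ ω ∂μ, ∀ᶠ n : ℕ in atTop, (a * log n) ^ (1 / γ) ≤ M n ω := by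
  filter_upwards [hM, ae_eventually_lt_card_filter_lt hξ hmeas ha hσ haσ
    (eventually_measure_lt_rpow_one_div_mul_log hγ hdist ha) hκ] with ω hω hcount
  filter_upwards [hω, hcount] with n h hn using h.le_of_lt_card hn

theorem ae_eventually_le_rpow_one_div_mul_log [IsFiniteMeasure μ] (hγ : 0 < γ)
    (hξ : iIndepFun ξ μ)
    (hdist : ∀ z, ∀ x : ℝ, 0 ≤ x → μ {ω | x < ξ z ω} = ENNReal.ofReal (exp (-(x ^ γ))))
    {b ρ : ℝ} (hb : 0 ≤ b) (hρ : 0 < ρ) (hbρ : d < b + ρ)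
    (hκ : ∀ᶠ n : ℕ in atTop, (n : ℝ) ^ ρ ≤ κ n + 1)
    (hM : ∀ᵐ ω ∂μ, ∀ᶠ n in atTop, IsUpperOrderStat (latticeBall d n) (ξ · ω) (κ n) (M n ω)) :
    ∀ᵐ ω ∂μ, ∀ᶠ n in atTop, M n ω ≤ (b * log n) ^ (1 / γ) := by
  filter_upwards [hM, ae_eventually_card_filter_lt_le hξ hρ hbρ
    (eventually_measure_lt_rpow_one_div_mul_log hγ hdist hb) hκ] with ω hω hcount
  filter_upwards [hω, hcount] with n h hn using h.le_of_card_le hn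

end WeibullField

theorem weibull_order_statistics_gaps
    {Ω : Type*} [MeasureSpace Ω] [IsProbabilityMeasure (ℙ : Measure Ω)]
    (d : ℕ) (hd : 1 ≤ d) (γ : ℝ) (hγ : γ ∈ Set.Ioc (0 : ℝ) 1)
    (ρ₁ ρ₂ : ℝ) (hρ₁ : 0 < ρ₁) (hρ₁₂ : ρ₁ < ρ₂) (hρ₂ : ρ₂ < 1)
    (ξ : (Fin d → ℤ) → Ω → ℝ) (hmeas : ∀ z, Measurable (ξ z))
    (hindep : iIndepFun ξ ℙ)
    (hdist : ∀ z, ∀ x : ℝ, 0 ≤ x → ℙ {ω | x < ξ z ω} = ENNReal.ofReal (Real.exp (-(x ^ γ))))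
    (Mk : ℕ → ℕ → Ω → ℝ)
    -- `Mk n k ω` is the `(k+1)`st largest value of the field on the ball of radius `n`:
    (hMk : ∀ᵐ ω ∂ℙ, ∀ᶠ n : ℕ in atTop, ∀ k ≤ ⌊(n : ℝ) ^ ρ₂⌋₊,
      (∃ z ∈ latticeBall d n, ξ z ω = Mk n k ω) ∧
      ((latticeBall d n).filter (fun z => Mk n k ω ≤ ξ z ω)).card = k + 1) :
    ∃ c : ℝ, 0 < c ∧ ∀ᵐ ω ∂ℙ, ∀ᶠ n : ℕ in atTop,
      c * (Real.log n) ^ (1 / γ) ≤ Mk n 0 ω - Mk n ⌊(n : ℝ) ^ ρ₁⌋₊ ω ∧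
      c * (Real.log n) ^ (1 / γ) ≤ Mk n ⌊(n : ℝ) ^ ρ₁⌋₊ ω - Mk n ⌊(n : ℝ) ^ ρ₂⌋₊ ω := by
  obtain ⟨hγ, -⟩ := hγ
  have hd' : (1 : ℝ) ≤ d := by exact_mod_cast hd
  obtain ⟨δ, hδ, hδ₁, hδ₂⟩ : ∃ δ : ℝ, 0 < δ ∧ 3 * δ ≤ ρ₁ ∧ 3 * δ ≤ ρ₂ - ρ₁ :=
    ⟨min ρ₁ (ρ₂ - ρ₁) / 3, by positivity, by linarith [min_le_left ρ₁ (ρ₂ - ρ₁)],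
      by linarith [min_le_right ρ₁ (ρ₂ - ρ₁)]⟩
  -- exponents of the bounds: lower at ranks `0`, `n ^ ρ₁`; upper at ranks `n ^ ρ₁`, `n ^ ρ₂`
  set a₀ := (d : ℝ) - δ
  set a₁ := (d : ℝ) - ρ₁ - δ
  set b₁ := (d : ℝ) - ρ₁ + δ
  set b₂ := (d : ℝ) - ρ₂ + δ
  obtain ⟨c, hc, hc₁, hc₂⟩ : ∃ c : ℝ, 0 < c ∧ c ≤ a₀ ^ (1 / γ) - b₁ ^ (1 / γ) ∧
      c ≤ a₁ ^ (1 / γ) - b₂ ^ (1 / γ) :=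
    ⟨_, lt_min (sub_pos.2 (rpow_lt_rpow (by linarith) (by linarith) (by positivity)))
      (sub_pos.2 (rpow_lt_rpow (by linarith) (by linarith) (by positivity))),
      min_le_left _ _, min_le_right _ _⟩
  refine ⟨c, hc, ?_⟩
  have hM : ∀ κ : ℕ → ℕ, (∀ᶠ n in atTop, κ n ≤ ⌊(n : ℝ) ^ ρ₂⌋₊) → ∀ᵐ ω ∂ℙ, ∀ᶠ n in atTop,
      IsUpperOrderStat (latticeBall d n) (ξ · ω) (κ n) (Mk n (κ n) ω) := fun κ hκ => by
    filter_upwards [hMk] with ω hω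
    filter_upwards [hω, hκ] with n hn hκn using hn _ hκn
  have hk₁ : ∀ᶠ n : ℕ in atTop, ⌊(n : ℝ) ^ ρ₁⌋₊ ≤ ⌊(n : ℝ) ^ ρ₂⌋₊ := by
    filter_upwards [eventually_ge_atTop 1] with n hn
    exact Nat.floor_le_floor (rpow_le_rpow_of_exponent_le (by exact_mod_cast hn) hρ₁₂.le)
  have hfloor : ∀ ρ : ℝ, ∀ᶠ n : ℕ in atTop, (n : ℝ) ^ ρ ≤ ⌊(n : ℝ) ^ ρ⌋₊ + 1 :=
    fun ρ => .of_forall fun n => (Nat.lt_floor_add_one _).le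
  filter_upwards [
    ae_eventually_rpow_one_div_mul_log_le (a := a₀) (σ := 0) hγ hindep hmeas hdist
      (by linarith) le_rfl (by linarith) (by simp) (hM (fun _ => 0) (by simp)),
    ae_eventually_rpow_one_div_mul_log_le (a := a₁) hγ hindep hmeas hdist (by linarith) hρ₁.le
      (by linarith) (.of_forall fun n => Nat.floor_le (by positivity)) (hM _ hk₁),
    ae_eventually_le_rpow_one_div_mul_log (b := b₁) hγ hindep hdist (by linarith) hρ₁
      (by linarith) (hfloor ρ₁) (hM _ hk₁),
    ae_eventually_le_rpow_one_div_mul_log (b := b₂) hγ hindep hdist (by linarith)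
      (hρ₁.trans hρ₁₂) (by linarith) (hfloor ρ₂) (hM _ (.of_forall fun _ => le_rfl))]
    with ω h₀ h₁ h₁' h₂
  filter_upwards [h₀, h₁, h₁', h₂] with n h₀ h₁ h₁' h₂
  have hL := log_natCast_nonneg n
  exact ⟨mul_rpow_le_sub (by linarith) (by linarith) hL hc₁ h₀ h₁',
    mul_rpow_le_sub (by linarith) (by linarith) hL hc₂ h₁ h₂⟩
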